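/- Let M be a von Neumann algebra, B a von Neumann subalgebra, and θ an automorphism of B. If there exists a nonzero partial isometry w in B such that θ(b)·w = w·b for all b ∈ B and the projections w*w and ww* belong to the center Z(B), and if additionally there is a one-parameter group (θ_t) of automorphisms of B commuting with θ and acting ergodically on Z(B), then θ is inner: there is a unitary W ∈ B with θ(b) = W b W* for all b ∈ B. -/

import Mathlib

open scoped InnerProductSpace ComplexConjugate


set_option linter.unusedSectionVars false

namespace Stmt7Aux

variable {H : Type*} [NormedAddCommGroup H] [InnerProductSpace ℂ H] [CompleteSpace H]
variable {ι : Type*}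

/-- Norm-squared of a finite sum of pairwise orthogonal vectors. -/
lemma norm_sum_sq (v : ι → H) (F : Finset ι)
    (h : ∀ i ∈ F, ∀ j ∈ F, i ≠ j → ⟪v i, v j⟫_ℂ = 0) :
    (‖∑ i ∈ F, v i‖ : ℝ) ^ 2 = ∑ i ∈ F, ‖v i‖ ^ 2 := by
  have key : ⟪∑ i ∈ F, v i, ∑ j ∈ F, v j⟫_ℂ = ((∑ i ∈ F, ‖v i‖ ^ 2 : ℝ) : ℂ) := by
    rw [sum_inner]
    push_cast
    refine Finset.sum_congr rfl fun i hi => ?_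
    rw [inner_sum, Finset.sum_eq_single i]
    · rw [inner_self_eq_norm_sq_to_K]; norm_cast
    · intro j hj hne; exact h i hi j hj (Ne.symm hne)
    · intro hi'; exact absurd hi hi'
  have h2 := inner_self_eq_norm_sq_to_K (𝕜 := ℂ) (∑ i ∈ F, v i)
  rw [key] at h2
  have h3 : ((∑ i ∈ F, ‖v i‖ ^ 2 : ℝ) : ℂ) = ((‖∑ i ∈ F, v i‖ ^ 2 : ℝ) : ℂ) := by
    rw [h2]; norm_cast
  exact_mod_cast h3.symm

/-- A pairwise orthogonal family with summable squared norms is summable. -/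
lemma ortho_summable (v : ι → H)
    (horth : ∀ i j, i ≠ j → ⟪v i, v j⟫_ℂ = 0)
    (h2 : Summable fun i => ‖v i‖ ^ 2) : Summable v := by
  rw [summable_iff_vanishing]
  intro e he
  obtain ⟨ε, hε, hball⟩ := Metric.mem_nhds_iff.mp he
  rw [summable_iff_vanishing] at h2
  have hpos : (0:ℝ) < ε ^ 2 := by positivity
  obtain ⟨s, hs⟩ := h2 (Metric.ball (0:ℝ) (ε ^ 2)) (Metric.ball_mem_nhds _ hpos)
  refine ⟨s, fun t ht => ?_⟩
  apply hball
  have h1 : (‖∑ i ∈ t, v i‖ : ℝ) ^ 2 = ∑ i ∈ t, ‖v i‖ ^ 2 :=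
    norm_sum_sq v t fun i _ j _ hij => horth i j hij
  have h2' : |∑ i ∈ t, ‖v i‖ ^ 2| < ε ^ 2 := by
    have := hs t ht
    simpa [Real.dist_eq] using this
  have hnn : (0:ℝ) ≤ ∑ i ∈ t, ‖v i‖ ^ 2 := Finset.sum_nonneg fun i _ => sq_nonneg _
  rw [abs_of_nonneg hnn] at h2'
  have hsq : ‖∑ i ∈ t, v i‖ ^ 2 < ε ^ 2 := by rw [h1]; exact h2'
  have hlt : ‖∑ i ∈ t, v i‖ < ε := by nlinarith [norm_nonneg (∑ i ∈ t, v i)]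
  simpa [Metric.mem_ball, dist_eq_norm] using hlt

/-- Distance to the image of a self-adjoint idempotent is minimal. -/
lemma norm_sub_proj_le' (Q : H →L[ℂ] H) (hsa : IsSelfAdjoint Q) (hid : Q * Q = Q)
    {v ξ : H} (hv : Q v = v) : ‖ξ - Q ξ‖ ≤ ‖ξ - v‖ := by
  have hadj : ContinuousLinearMap.adjoint Q = Q := by
    rw [← ContinuousLinearMap.star_eq_adjoint, hsa.star_eq]
  have h0 : ⟪ξ - Q ξ, Q (ξ - v)⟫_ℂ = 0 := by
    have hal := ContinuousLinearMap.adjoint_inner_left Q (ξ - v) (ξ - Q ξ)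
    rw [hadj] at hal
    rw [← hal]
    have hz : Q (ξ - Q ξ) = 0 := by
      have hq := congrArg (fun T => T ξ) hid
      simp only [ContinuousLinearMap.mul_apply] at hq
      simp [map_sub, hq]
    rw [hz, inner_zero_left]
  have hdecomp : ξ - v = (ξ - Q ξ) + Q (ξ - v) := by
    have : Q (ξ - v) = Q ξ - v := by rw [map_sub, hv]
    rw [this]; abel
  have hsq : ‖(ξ - Q ξ) + Q (ξ - v)‖ ^ 2 = ‖ξ - Q ξ‖ ^ 2 + ‖Q (ξ - v)‖ ^ 2 := by
    rw [norm_add_sq (𝕜 := ℂ), h0]; simp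
  rw [← hdecomp] at hsq
  nlinarith [norm_nonneg (ξ - v), norm_nonneg (ξ - Q ξ), sq_nonneg ‖Q (ξ - v)‖]


/-- The closed subspace generated by the ranges of a family of operators. -/
noncomputable def supK (P : ι → H →L[ℂ] H) : Submodule ℂ H :=
  (⨆ i, LinearMap.range ((P i) : H →ₗ[ℂ] H)).topologicalClosure

lemma supK_isClosed (P : ι → H →L[ℂ] H) : IsClosed ((supK P : Submodule ℂ H) : Set H) :=
  Submodule.isClosed_topologicalClosure _

lemma mem_supK (P : ι → H →L[ℂ] H) (i : ι) (ξ : H) : P i ξ ∈ supK P :=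
  Submodule.le_topologicalClosure _
    (Submodule.mem_iSup_of_mem i (LinearMap.mem_range_self _ ξ))

lemma supK_le (P : ι → H →L[ℂ] H) {N : Submodule ℂ H} (hN : IsClosed (N : Set H))
    (h : ∀ i ξ, P i ξ ∈ N) : supK P ≤ N := by
  refine Submodule.topologicalClosure_minimal _ (iSup_le fun i => ?_) hN
  rintro x ⟨ξ, rfl⟩
  exact h i ξ

noncomputable instance (P : ι → H →L[ℂ] H) : CompleteSpace (supK P) :=
  (supK_isClosed P).completeSpace_coe

/-- The orthogonal projection onto `supK P`, as an endomorphism of `H`. -/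
noncomputable def supProj (P : ι → H →L[ℂ] H) : H →L[ℂ] H :=
  (supK P).subtypeL.comp (Submodule.orthogonalProjectionOnto (supK P))

lemma supProj_apply_mem (P : ι → H →L[ℂ] H) (ξ : H) : supProj P ξ ∈ supK P := by
  exact ((Submodule.orthogonalProjectionOnto (supK P)) ξ).2

lemma supProj_eq_self (P : ι → H →L[ℂ] H) {ξ : H} (h : ξ ∈ supK P) : supProj P ξ = ξ :=
  Submodule.starProjection_eq_self_iff.mpr h

lemma supProj_fix (P : ι → H →L[ℂ] H) (i : ι) (ξ : H) : supProj P (P i ξ) = P i ξ :=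
  supProj_eq_self P (mem_supK P i ξ)

lemma supProj_isSelfAdjoint (P : ι → H →L[ℂ] H) : IsSelfAdjoint (supProj P) :=
  isSelfAdjoint_starProjection (supK P)

lemma supProj_orthogonal (P : ι → H →L[ℂ] H) {ξ : H} (h : ξ ∈ (supK P)ᗮ) :
    supProj P ξ = 0 := by
  have := Submodule.orthogonalProjectionOnto_apply_of_mem_orthogonal h
  simp only [supProj, ContinuousLinearMap.comp_apply, this, ZeroMemClass.coe_zero,
    Submodule.coe_subtypeL', Submodule.subtype_apply]

lemma supProj_idem (P : ι → H →L[ℂ] H) : supProj P * supProj P = supProj P := by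
  ext ξ
  exact supProj_eq_self P (supProj_apply_mem P ξ)

/-- Any operator fixing all vectors in the ranges fixes the sup projection's image. -/
lemma comp_supProj (P : ι → H →L[ℂ] H) (e : H →L[ℂ] H)
    (he : ∀ i ξ, e (P i ξ) = P i ξ) (ξ : H) : e (supProj P ξ) = supProj P ξ := by
  have hker : supK P ≤ LinearMap.ker ((e - 1 : H →L[ℂ] H) : H →ₗ[ℂ] H) := by
    refine supK_le P (ContinuousLinearMap.isClosed_ker _) ?_
    intro i η
    simp [LinearMap.mem_ker, he i η]
  have := hker (supProj_apply_mem P ξ)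
  simp only [LinearMap.mem_ker, ContinuousLinearMap.coe_coe, ContinuousLinearMap.sub_apply, ContinuousLinearMap.one_apply,
    sub_eq_zero] at this
  exact this

/-- Any operator killing all the ranges kills the sup projection's image. -/
lemma comp_supProj_zero (P : ι → H →L[ℂ] H) (e : H →L[ℂ] H)
    (he : ∀ i ξ, e (P i ξ) = 0) (ξ : H) : e (supProj P ξ) = 0 := by
  have hker : supK P ≤ LinearMap.ker ((e : H →L[ℂ] H) : H →ₗ[ℂ] H) := by
    refine supK_le P (ContinuousLinearMap.isClosed_ker _) ?_
    intro i η
    simp [LinearMap.mem_ker, he i η]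
  exact hker (supProj_apply_mem P ξ)

/-- If `T` and `adjoint T` both map `supK P` into itself, then `T` commutes with `supProj P`. -/
lemma supProj_comm (P : ι → H →L[ℂ] H) (T : H →L[ℂ] H)
    (h1 : ∀ ξ, ξ ∈ supK P → T ξ ∈ supK P)
    (h2 : ∀ ξ, ξ ∈ supK P → (ContinuousLinearMap.adjoint T) ξ ∈ supK P)
    (ξ : H) : T (supProj P ξ) = supProj P (T ξ) := by
  have hperp : T (ξ - supProj P ξ) ∈ (supK P)ᗮ := by
    rw [Submodule.mem_orthogonal]
    intro u hu
    have hmem : ξ - supProj P ξ ∈ (supK P)ᗮ :=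
      Submodule.sub_starProjection_mem_orthogonal (K := supK P) ξ
    have h3 : ⟪(ContinuousLinearMap.adjoint T) u, ξ - supProj P ξ⟫_ℂ = 0 :=
      (Submodule.mem_orthogonal _ _).mp hmem _ (h2 u hu)
    calc ⟪u, T (ξ - supProj P ξ)⟫_ℂ
        = ⟪(ContinuousLinearMap.adjoint T) u, ξ - supProj P ξ⟫_ℂ :=
          (ContinuousLinearMap.adjoint_inner_left T _ _).symm
      _ = 0 := h3
  have hTz : supProj P (T (supProj P ξ)) = T (supProj P ξ) :=
    supProj_eq_self P (h1 _ (supProj_apply_mem P ξ))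
  have hzero : supProj P (T (ξ - supProj P ξ)) = 0 := supProj_orthogonal P hperp
  have hsplit : T ξ = T (supProj P ξ) + T (ξ - supProj P ξ) := by
    rw [← map_add]; congr 1; abel
  rw [hsplit, map_add, hTz, hzero, add_zero]

/-- Decomposition: if the `P i` are pairwise orthogonal self-adjoint idempotents and
`ξ ∈ supK P`, then `ξ` is the sum of the `P i ξ`. -/
lemma hasSum_of_mem_supK (P : ι → H →L[ℂ] H)
    (hsa : ∀ i, IsSelfAdjoint (P i)) (hid : ∀ i, P i * P i = P i)
    (horth : ∀ i j, i ≠ j → P i * P j = 0)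
    {ξ : H} (h : ξ ∈ supK P) : HasSum (fun i => P i ξ) ξ := by
  rw [HasSum, Metric.tendsto_nhds]
  intro ε hε
  have hξ : ξ ∈ closure ((⨆ i, LinearMap.range ((P i) : H →ₗ[ℂ] H) : Submodule ℂ H) : Set H) := by
    rw [← Submodule.topologicalClosure_coe]
    exact h
  obtain ⟨v, hv, hdist⟩ := Metric.mem_closure_iff.mp hξ ε hε
  obtain ⟨F₀, hF₀⟩ := Submodule.mem_iSup_iff_exists_finset.mp hv
  rw [SummationFilter.unconditional_filter, Filter.eventually_atTop]
  refine ⟨F₀, fun F hF => ?_⟩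
  set Q : H →L[ℂ] H := ∑ i ∈ F, P i with hQ
  have hQsa : IsSelfAdjoint Q := by
    rw [hQ, IsSelfAdjoint, star_sum]
    exact Finset.sum_congr rfl fun i _ => (hsa i).star_eq
  have hQid : Q * Q = Q := by
    rw [hQ, Finset.sum_mul_sum]
    refine Finset.sum_congr rfl fun i hi => ?_
    rw [Finset.sum_eq_single i]
    · exact hid i
    · intro j hj hne; exact horth i j (Ne.symm hne)
    · intro hi'; exact absurd hi hi'
  have hQP : ∀ i ∈ F, ∀ η : H, Q (P i η) = P i η := by
    intro i hi η
    rw [hQ, ContinuousLinearMap.sum_apply]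
    rw [Finset.sum_eq_single i]
    · have := congrArg (fun T => T η) (hid i)
      simpa using this
    · intro j hj hne
      have := congrArg (fun T => T η) (horth j i hne)
      simpa using this
    · intro hi'; exact absurd hi hi'
  have hQv : Q v = v := by
    have hsub : (⨆ i ∈ F₀, LinearMap.range ((P i) : H →ₗ[ℂ] H) : Submodule ℂ H) ≤
        LinearMap.ker ((Q - 1 : H →L[ℂ] H) : H →ₗ[ℂ] H) := by
      refine iSup₂_le fun i hi => ?_
      rintro x ⟨η, rfl⟩
      simp [LinearMap.mem_ker, hQP i (hF hi) η]
    have := hsub hF₀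
    simp only [LinearMap.mem_ker, ContinuousLinearMap.coe_coe, ContinuousLinearMap.sub_apply, ContinuousLinearMap.one_apply,
      sub_eq_zero] at this
    exact this
  have hle : ‖ξ - Q ξ‖ ≤ ‖ξ - v‖ := norm_sub_proj_le' Q hQsa hQid hQv
  have hsum : ∑ i ∈ F, P i ξ = Q ξ := by
    rw [hQ, ContinuousLinearMap.sum_apply]
  rw [dist_eq_norm, hsum, ← norm_neg, neg_sub]
  calc ‖ξ - Q ξ‖ ≤ ‖ξ - v‖ := hle
    _ < ε := by rw [← dist_eq_norm]; exact hdist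



lemma supK_mapsto (P : ι → H →L[ℂ] H) (T : H →L[ℂ] H)
    (h : ∀ i ξ, T (P i ξ) ∈ supK P) : ∀ ξ ∈ supK P, T ξ ∈ supK P := by
  have hle : supK P ≤ (supK P).comap (T : H →ₗ[ℂ] H) := by
    refine supK_le P ?_ h
    exact (supK_isClosed P).preimage T.continuous
  intro ξ hξ
  exact hle hξ

/-- For a self-adjoint `A`, move it across the inner product. -/
lemma inner_selfAdjoint_move (A : H →L[ℂ] H) (hsa : IsSelfAdjoint A) (x y : H) :
    ⟪A x, y⟫_ℂ = ⟪x, A y⟫_ℂ := by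
  have hadj : ContinuousLinearMap.adjoint A = A := by
    rw [← ContinuousLinearMap.star_eq_adjoint, hsa.star_eq]
  calc ⟪A x, y⟫_ℂ = ⟪(ContinuousLinearMap.adjoint A) x, y⟫_ℂ := by rw [hadj]
    _ = ⟪x, A y⟫_ℂ := ContinuousLinearMap.adjoint_inner_left A y x

/-- Bessel-type inequality for finite sums of pairwise orthogonal projections. -/
lemma sum_proj_norm_sq_le (P : ι → H →L[ℂ] H)
    (hsa : ∀ i, IsSelfAdjoint (P i)) (hid : ∀ i, P i * P i = P i)
    (horth : ∀ i j, i ≠ j → P i * P j = 0) (F : Finset ι) (ξ : H) :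
    ∑ i ∈ F, ‖P i ξ‖ ^ 2 ≤ ‖ξ‖ ^ 2 := by
  set Q : H →L[ℂ] H := ∑ i ∈ F, P i with hQ
  have hQsa : IsSelfAdjoint Q := by
    rw [hQ, IsSelfAdjoint, star_sum]
    exact Finset.sum_congr rfl fun i _ => (hsa i).star_eq
  have hQid : Q * Q = Q := by
    rw [hQ, Finset.sum_mul_sum]
    refine Finset.sum_congr rfl fun i hi => ?_
    rw [Finset.sum_eq_single i]
    · exact hid i
    · intro j hj hne; exact horth i j (Ne.symm hne)
    · intro hi'; exact absurd hi hi'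
  have horthv : ∀ i ∈ F, ∀ j ∈ F, i ≠ j → ⟪P i ξ, P j ξ⟫_ℂ = 0 := by
    intro i _ j _ hij
    rw [inner_selfAdjoint_move (P i) (hsa i), ← ContinuousLinearMap.mul_apply,
      horth i j hij]
    simp
  have hsum : ∑ i ∈ F, ‖P i ξ‖ ^ 2 = ‖Q ξ‖ ^ 2 := by
    rw [← norm_sum_sq (fun i => P i ξ) F horthv, hQ, ContinuousLinearMap.sum_apply]
  have hQle : ‖Q ξ‖ ≤ ‖ξ‖ := by
    have h1 : ⟪Q ξ, Q ξ⟫_ℂ = ⟪ξ, Q ξ⟫_ℂ := by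
      rw [inner_selfAdjoint_move Q hQsa]
      congr 1
      have := congrArg (fun T => T ξ) hQid
      simpa [ContinuousLinearMap.mul_apply] using this
    have h2 : (‖Q ξ‖ : ℝ) ^ 2 ≤ ‖ξ‖ * ‖Q ξ‖ := by
      have h3 := inner_self_eq_norm_sq_to_K (𝕜 := ℂ) (Q ξ)
      have h4 : ‖⟪Q ξ, Q ξ⟫_ℂ‖ = ‖Q ξ‖ ^ 2 := by
        rw [h3, norm_pow, RCLike.norm_ofReal, abs_norm]
      have h5 : ‖⟪ξ, Q ξ⟫_ℂ‖ ≤ ‖ξ‖ * ‖Q ξ‖ := norm_inner_le_norm (𝕜 := ℂ) ξ (Q ξ)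
      calc (‖Q ξ‖ : ℝ) ^ 2 = ‖⟪Q ξ, Q ξ⟫_ℂ‖ := h4.symm
        _ = ‖⟪ξ, Q ξ⟫_ℂ‖ := by rw [h1]
        _ ≤ ‖ξ‖ * ‖Q ξ‖ := h5
    rcases eq_or_lt_of_le (norm_nonneg (Q ξ)) with h | h
    · rw [← h]; exact norm_nonneg ξ
    · nlinarith
  rw [hsum]
  nlinarith [norm_nonneg (Q ξ), norm_nonneg ξ]

/-- Inner products pass through `HasSum` in the second slot. -/
lemma hasSum_inner_right {ι' : Type*} {f : ι' → H} {a : H} (v : H) (h : HasSum f a) :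
    HasSum (fun i => ⟪v, f i⟫_ℂ) ⟪v, a⟫_ℂ := by
  have := (innerSL ℂ v).hasSum h
  simpa using this

/-- Inner products pass through `HasSum` in the first slot. -/
lemma hasSum_inner_left {ι' : Type*} {f : ι' → H} {a : H} (v : H) (h : HasSum f a) :
    HasSum (fun i => ⟪f i, v⟫_ℂ) ⟪a, v⟫_ℂ := by
  have := (hasSum_inner_right v h).star
  simpa [inner_conj_symm] using this

/-- A `supProj` of a family of members of a von Neumann algebra belongs to the algebra. -/
lemma supProj_mem_vNA (B : VonNeumannAlgebra H) (P : ι → H →L[ℂ] H)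
    (hP : ∀ i, P i ∈ B) : supProj P ∈ B := by
  have hgoal : supProj P ∈ Set.centralizer (Set.centralizer (B : Set (H →L[ℂ] H))) := by
    apply Set.mem_centralizer_iff.mpr
    intro T hT
    have hTcomm : ∀ b ∈ B, b * T = T * b := fun b hb => Set.mem_centralizer_iff.mp hT b hb
    have hTstar : ∀ b ∈ B, b * star T = star T * b := by
      intro b hb
      have h1 : star b * T = T * star b := hTcomm (star b) (star_mem hb)
      calc b * star T = star (T * star b) := by simp [star_mul]
        _ = star (star b * T) := by rw [← h1]
        _ = star T * b := by simp [star_mul]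
    have h1 : ∀ ξ ∈ supK P, T ξ ∈ supK P := by
      apply supK_mapsto
      intro i ξ
      have h : T (P i ξ) = P i (T ξ) := by
        have h2 := hTcomm (P i) (hP i)
        calc T (P i ξ) = (T * P i) ξ := rfl
          _ = (P i * T) ξ := by rw [← h2]
          _ = P i (T ξ) := rfl
      rw [h]; exact mem_supK P i (T ξ)
    have h2 : ∀ ξ ∈ supK P, (ContinuousLinearMap.adjoint T) ξ ∈ supK P := by
      apply supK_mapsto
      intro i ξ
      have hadj : ContinuousLinearMap.adjoint T = star T :=
        (ContinuousLinearMap.star_eq_adjoint T).symm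
      have hc := hTstar (P i) (hP i)
      have h : (star T) (P i ξ) = P i ((star T) ξ) := by
        calc (star T) (P i ξ) = (star T * P i) ξ := rfl
          _ = (P i * star T) ξ := by rw [← hc]
          _ = P i ((star T) ξ) := rfl
      rw [hadj, h]; exact mem_supK P i _
    ext ξ
    have h := supProj_comm P T h1 h2 ξ
    calc (T * supProj P) ξ = T (supProj P ξ) := rfl
      _ = supProj P (T ξ) := h
      _ = (supProj P * T) ξ := rfl
  rw [B.centralizer_centralizer] at hgoal
  exact hgoal

end Stmt7Aux


set_option maxHeartbeats 10000000
set_option synthInstance.maxHeartbeats 1000000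



/-- Let `M` be a von Neumann algebra, `B ⊆ M` a von Neumann subalgebra
and `θ` a *-automorphism of `B`. If there is a nonzero partial isometry `w ∈ B` with
`θ(b)·w = w·b` for all `b ∈ B`, whose source and range projections `w*w, ww*` are
central, and if there is a one-parameter group `(θ_t)` of *-automorphisms of `B`
commuting with `θ` and acting ergodically on `Z(B)` (its fixed points in the center are
the scalars), then `θ` is inner: `θ = Ad(W)` for a unitary `W ∈ B`. -/
theorem stmt7 {H : Type*} [NormedAddCommGroup H] [InnerProductSpace ℂ H]
    [CompleteSpace H]
    (M B : VonNeumannAlgebra H) (hBM : ∀ x, x ∈ B → x ∈ M)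
    (θ : B.toStarSubalgebra ≃⋆ₐ[ℂ] B.toStarSubalgebra)
    (θt : ℝ → (B.toStarSubalgebra ≃⋆ₐ[ℂ] B.toStarSubalgebra))
    (hθt0 : ∀ b, θt 0 b = b)
    (hθtadd : ∀ (s t : ℝ) (b : B.toStarSubalgebra), θt s (θt t b) = θt (s + t) b)
    (hcomm : ∀ (t : ℝ) (b : B.toStarSubalgebra), θt t (θ b) = θ (θt t b))
    (herg : ∀ z : B.toStarSubalgebra, z ∈ Set.center B.toStarSubalgebra →
      (∀ t : ℝ, θt t z = z) → ∃ c : ℂ, z = c • 1)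
    (w : B.toStarSubalgebra) (hw0 : w ≠ 0)
    (hwpi : w * star w * w = w)
    (hsrc : star w * w ∈ Set.center B.toStarSubalgebra)
    (hrng : w * star w ∈ Set.center B.toStarSubalgebra)
    (hint : ∀ b : B.toStarSubalgebra, θ b * w = w * b) :
    ∃ W : B.toStarSubalgebra, star W * W = 1 ∧ W * star W = 1 ∧
      ∀ b : B.toStarSubalgebra, θ b = W * b * star W := by
  classical
  -- ## Part 1 : subtype-level algebra
  set p : B.toStarSubalgebra := star w * w with hpdef
  set q : B.toStarSubalgebra := w * star w with hqdef
  have hcp : ∀ b, b * p = p * b := fun b => Semigroup.mem_center_iff.mp hsrc b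
  have hcq : ∀ b, b * q = q * b := fun b => Semigroup.mem_center_iff.mp hrng b
  have hwp : w * p = w := by rw [hpdef, ← mul_assoc, hwpi]
  have hqw : q * w = w := by rw [hqdef, hwpi]
  have hswq : star w * q = star w := by
    have h := congrArg star hwpi
    simpa [star_mul, mul_assoc, hqdef] using h
  have hswθ : ∀ b, star w * θ b = b * star w := by
    intro b
    have h := congrArg star (hint (star b))
    simpa [star_mul, map_star, mul_assoc] using h
  have hcent_equiv : ∀ (φ : B.toStarSubalgebra ≃⋆ₐ[ℂ] B.toStarSubalgebra)
      (e : B.toStarSubalgebra), (∀ b, b * e = e * b) → ∀ b, b * φ e = φ e * b := by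
    intro φ e he b
    have h := congrArg φ (he (φ.symm b))
    simpa [map_mul] using h
  have hθp_q : θ p = q := by
    have h1 : θ p * q = q := by
      have hw' : θ p * w = w := by rw [hint p, hwp]
      calc θ p * q = θ p * w * star w := by rw [hqdef, mul_assoc]
        _ = w * star w := by rw [hw']
        _ = q := hqdef.symm
    have h2 : q * θ p = θ p := by
      have h3 : θ.symm q * star w = star w := by
        have h := hswθ (θ.symm q)
        rw [StarAlgEquiv.apply_symm_apply] at h
        rw [← h]
        exact hswq
      have h4 : θ.symm q * p = p := by
        calc θ.symm q * p = θ.symm q * star w * w := by rw [hpdef, mul_assoc]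
          _ = star w * w := by rw [h3]
          _ = p := hpdef.symm
      have h := congrArg θ h4
      simpa [map_mul] using h
    calc θ p = q * θ p := h2.symm
      _ = θ p * q := (hcq (θ p)).symm
      _ = q := h1
  have hp_ne : p ≠ 0 := fun h => hw0 (by rw [← hwp, h, mul_zero])
  have hone_ne : (1 : B.toStarSubalgebra) ≠ 0 := fun h => hw0 (by rw [← mul_one w, h, mul_zero])
  have hp_sa : star p = p := by
    rw [hpdef]; simp [star_mul]
  have hp_idem : p * p = p := by
    have h1 : p * p = star w * (w * star w * w) := by rw [hpdef]; simp only [mul_assoc]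
    rw [h1, hwpi, hpdef]
  -- flow basics
  have hflow : ∀ (t : ℝ) (b), θt t (θt (-t) b) = b := by
    intro t b; rw [hθtadd]; simp [hθt0]
  have hflow' : ∀ (t : ℝ) (b), θt (-t) (θt t b) = b := by
    intro t b; rw [hθtadd]; simp [hθt0]
  -- ## Part 2 : Zorn's lemma for a maximal family
  set S : Set (Set (ℝ × B.toStarSubalgebra)) :=
    {s | (∀ x ∈ s, (star x.2 = x.2 ∧ x.2 * x.2 = x.2 ∧ ∀ b, b * x.2 = x.2 * b) ∧
            x.2 * p = x.2 ∧ x.2 ≠ 0) ∧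
          ∀ x ∈ s, ∀ y ∈ s, x ≠ y → θt x.1 x.2 * θt y.1 y.2 = 0} with hSdef
  obtain ⟨s, hsmax⟩ := zorn_subset S (by
    intro c hcS hchain
    refine ⟨⋃₀ c, ⟨?_, ?_⟩, fun t ht => Set.subset_sUnion_of_mem ht⟩
    · rintro x ⟨t, htc, hxt⟩
      exact (hcS htc).1 x hxt
    · rintro x ⟨t1, h1c, hx1⟩ y ⟨t2, h2c, hy2⟩ hxy
      rcases hchain.total h1c h2c with h | h
      · exact (hcS h2c).2 x (h hx1) y hy2 hxy
      · exact (hcS h1c).2 x hx1 y (h hy2) hxy)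
  have hsS : s ∈ S := hsmax.1
  -- ## Part 3 : the projection family and its sup
  set ΘA : ↥s → B.toStarSubalgebra := fun i => θt (i : ℝ × B.toStarSubalgebra).1 (i : ℝ × B.toStarSubalgebra).2 with hΘAdef
  set Pop : ↥s → (H →L[ℂ] H) := fun i => ((ΘA i : B.toStarSubalgebra) : H →L[ℂ] H) with hPopdef
  have hmemfact : ∀ i : ↥s, (star (i : ℝ × B.toStarSubalgebra).2 = (i : ℝ × B.toStarSubalgebra).2 ∧
      (i : ℝ × B.toStarSubalgebra).2 * (i : ℝ × B.toStarSubalgebra).2 = (i : ℝ × B.toStarSubalgebra).2 ∧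
      ∀ b, b * (i : ℝ × B.toStarSubalgebra).2 = (i : ℝ × B.toStarSubalgebra).2 * b) ∧
      (i : ℝ × B.toStarSubalgebra).2 * p = (i : ℝ × B.toStarSubalgebra).2 ∧
      (i : ℝ × B.toStarSubalgebra).2 ≠ 0 := fun i => hsS.1 i.1 i.2
  have hΘsa : ∀ i, star (ΘA i) = ΘA i := by
    intro i
    rw [hΘAdef, ← map_star, (hmemfact i).1.1]
  have hΘidem : ∀ i, ΘA i * ΘA i = ΘA i := by
    intro i
    rw [hΘAdef, ← map_mul, (hmemfact i).1.2.1]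
  have hΘcent : ∀ i, ∀ b, b * ΘA i = ΘA i * b := by
    intro i
    exact hcent_equiv _ _ (hmemfact i).1.2.2
  have hΘorth : ∀ i j : ↥s, i ≠ j → ΘA i * ΘA j = 0 := by
    intro i j hij
    exact hsS.2 i.1 i.2 j.1 j.2 (fun h => hij (Subtype.ext h))
  -- operator level
  have hPsa : ∀ i, IsSelfAdjoint (Pop i) := by
    intro i
    show star ((ΘA i : B.toStarSubalgebra) : H →L[ℂ] H) = _
    rw [show star ((ΘA i : B.toStarSubalgebra) : H →L[ℂ] H)
        = ((star (ΘA i) : B.toStarSubalgebra) : H →L[ℂ] H) from rfl, hΘsa i]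
  have hPidem : ∀ i, Pop i * Pop i = Pop i := by
    intro i
    rw [show Pop i * Pop i = ((ΘA i * ΘA i : B.toStarSubalgebra) : H →L[ℂ] H) from rfl, hΘidem i]
  have hPorth : ∀ i j, i ≠ j → Pop i * Pop j = 0 := by
    intro i j hij
    rw [show Pop i * Pop j = ((ΘA i * ΘA j : B.toStarSubalgebra) : H →L[ℂ] H) from rfl,
      hΘorth i j hij]
    rfl
  have hPmem : ∀ i, Pop i ∈ B := fun i => (ΘA i).2
  -- the sup projection of the family lies in B
  have hzmem : Stmt7Aux.supProj Pop ∈ B := Stmt7Aux.supProj_mem_vNA B Pop hPmem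
  set zA : B.toStarSubalgebra := ⟨Stmt7Aux.supProj Pop, hzmem⟩ with hzAdef
  have hzfix : ∀ i, zA * ΘA i = ΘA i := by
    intro i
    apply Subtype.ext
    apply ContinuousLinearMap.ext
    intro ξ
    exact Stmt7Aux.supProj_fix Pop i ξ
  have hzcent : ∀ b, b * zA = zA * b := by
    intro b
    apply Subtype.ext
    apply ContinuousLinearMap.ext
    intro ξ
    show (b : H →L[ℂ] H) (Stmt7Aux.supProj Pop ξ) = Stmt7Aux.supProj Pop ((b : H →L[ℂ] H) ξ)
    refine Stmt7Aux.supProj_comm Pop _ ?_ ?_ ξ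
    · apply Stmt7Aux.supK_mapsto
      intro i η
      have h : (b : H →L[ℂ] H) (Pop i η) = Pop i ((b : H →L[ℂ] H) η) := by
        have h2 := congrArg (fun a : B.toStarSubalgebra => (a : H →L[ℂ] H) η) (hΘcent i b)
        exact h2
      rw [h]; exact Stmt7Aux.mem_supK Pop i _
    · apply Stmt7Aux.supK_mapsto
      intro i η
      rw [← ContinuousLinearMap.star_eq_adjoint]
      have h : (star (b : H →L[ℂ] H)) (Pop i η) = Pop i ((star (b : H →L[ℂ] H)) η) := by
        have h2 := congrArg (fun a : B.toStarSubalgebra => (a : H →L[ℂ] H) η)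
          (hΘcent i (star b))
        exact h2
      rw [h]; exact Stmt7Aux.mem_supK Pop i _
  have hz_sa : star zA = zA := Subtype.ext (Stmt7Aux.supProj_isSelfAdjoint Pop).star_eq
  have hz_idem : zA * zA = zA := Subtype.ext (Stmt7Aux.supProj_idem Pop)
  -- ## Part 4 : maximality forces the sup projection to be 1
  have hzA1 : zA = 1 := by
    by_contra hne
    set r : B.toStarSubalgebra := 1 - zA with hrdef
    have hr0 : r ≠ 0 := by
      rw [hrdef]
      exact sub_ne_zero.mpr fun h => hne h.symm
    have hr_cent : ∀ b, b * r = r * b := by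
      intro b
      rw [hrdef, mul_sub, sub_mul, mul_one, one_mul, hzcent b]
    have hr_sa : star r = r := by
      rw [hrdef, star_sub, star_one, hz_sa]
    have hr_idem : r * r = r := by
      rw [hrdef, sub_mul, one_mul, mul_sub, mul_one, hz_idem, sub_self, sub_zero]
    have hzΘ : ∀ i : ↥s, r * ΘA i = 0 := by
      intro i
      rw [hrdef, sub_mul, one_mul, hzfix i, sub_self]
    by_cases hcase : ∀ t : ℝ, θt t p * r = 0
    · -- the flow-orbit of `p` misses `r` entirely : contradiction with ergodicity
      have hpr : ∀ u : ℝ, p * θt u r = 0 := by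
        intro u
        have h := congrArg (θt u) (hcase (-u))
        rw [map_mul, map_zero, hθtadd, show u + -u = 0 by ring, hθt0] at h
        exact h
      set P' : ℝ → (H →L[ℂ] H) := fun u => ((θt u r : B.toStarSubalgebra) : H →L[ℂ] H)
        with hP'def
      have hz'mem : Stmt7Aux.supProj P' ∈ B :=
        Stmt7Aux.supProj_mem_vNA B P' (fun u => (θt u r).2)
      set z'A : B.toStarSubalgebra := ⟨Stmt7Aux.supProj P', hz'mem⟩ with hz'Adef
      have hz'fix : ∀ u, z'A * θt u r = θt u r := by
        intro u
        apply Subtype.ext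
        apply ContinuousLinearMap.ext
        intro ξ
        exact Stmt7Aux.supProj_fix P' u ξ
      have hz'cent : ∀ b, b * z'A = z'A * b := by
        intro b
        apply Subtype.ext
        apply ContinuousLinearMap.ext
        intro ξ
        show (b : H →L[ℂ] H) (Stmt7Aux.supProj P' ξ) =
          Stmt7Aux.supProj P' ((b : H →L[ℂ] H) ξ)
        have hθurc : ∀ u, ∀ b', b' * θt u r = θt u r * b' :=
          fun u => hcent_equiv _ _ hr_cent
        refine Stmt7Aux.supProj_comm P' _ ?_ ?_ ξ
        · apply Stmt7Aux.supK_mapsto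
          intro u η
          have h : (b : H →L[ℂ] H) (P' u η) = P' u ((b : H →L[ℂ] H) η) :=
            congrArg (fun a : B.toStarSubalgebra => (a : H →L[ℂ] H) η) (hθurc u b)
          rw [h]; exact Stmt7Aux.mem_supK P' u _
        · apply Stmt7Aux.supK_mapsto
          intro u η
          rw [← ContinuousLinearMap.star_eq_adjoint]
          have h : (star (b : H →L[ℂ] H)) (P' u η) = P' u ((star (b : H →L[ℂ] H)) η) :=
            congrArg (fun a : B.toStarSubalgebra => (a : H →L[ℂ] H) η) (hθurc u (star b))
          rw [h]; exact Stmt7Aux.mem_supK P' u _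
      have step2 : ∀ t u : ℝ, θt t z'A * θt u r = θt u r := by
        intro t u
        have h := congrArg (θt t) (hz'fix (u - t))
        rw [map_mul, hθtadd, show t + (u - t) = u by ring] at h
        exact h
      have step3 : ∀ t : ℝ, θt t z'A * z'A = z'A := by
        intro t
        apply Subtype.ext
        apply ContinuousLinearMap.ext
        intro ξ
        exact Stmt7Aux.comp_supProj P' ((θt t z'A : B.toStarSubalgebra) : H →L[ℂ] H)
          (fun u η => congrArg (fun a : B.toStarSubalgebra => (a : H →L[ℂ] H) η) (step2 t u)) ξ
      have step4 : ∀ t : ℝ, z'A * θt t z'A = θt t z'A := by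
        intro t
        have h := congrArg (θt t) (step3 (-t))
        rw [map_mul, hθtadd, show t + -t = 0 by ring, hθt0] at h
        exact h
      have hz'θt : ∀ t : ℝ, θt t z'A = z'A := by
        intro t
        calc θt t z'A = z'A * θt t z'A := (step4 t).symm
          _ = θt t z'A * z'A := (hz'cent (θt t z'A)).symm
          _ = z'A := step3 t
      obtain ⟨c, hc⟩ := herg z'A (Semigroup.mem_center_iff.mpr fun g => hz'cent g) hz'θt
      have hz'r : z'A * r = r := by
        have h := hz'fix 0
        rwa [hθt0 r] at h
      have hpz' : p * z'A = 0 := by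
        apply Subtype.ext
        apply ContinuousLinearMap.ext
        intro ξ
        exact Stmt7Aux.comp_supProj_zero P' ((p : B.toStarSubalgebra) : H →L[ℂ] H)
          (fun u η => congrArg (fun a : B.toStarSubalgebra => (a : H →L[ℂ] H) η) (hpr u)) ξ
      have hr_eq : c • r = r := by
        calc c • r = c • (1 * r) := by rw [one_mul]
          _ = (c • 1) * r := (smul_mul_assoc c 1 r).symm
          _ = z'A * r := by rw [← hc]
          _ = r := hz'r
      have hp_eq : c • p = 0 := by
        calc c • p = p * (c • 1) := by rw [mul_smul_comm, mul_one]
          _ = p * z'A := by rw [← hc]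
          _ = 0 := hpz'
      rcases eq_or_ne c 0 with h0 | h0
      · exact hr0 (by rw [← hr_eq, h0, zero_smul])
      · refine hp_ne ?_
        have h := congrArg (fun x : B.toStarSubalgebra => c⁻¹ • x) hp_eq
        simpa [smul_smul, inv_mul_cancel₀ h0] using h
    · -- there is a piece of the flow-orbit of `p` under `r` : extend the family
      push_neg at hcase
      obtain ⟨t, hgne⟩ := hcase
      set g : B.toStarSubalgebra := θt t p * r with hgdef
      set e : B.toStarSubalgebra := p * θt (-t) r with hedef
      have hθte : θt t e = g := by
        rw [hedef, map_mul, hflow]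
      have hcθr : ∀ b, b * θt (-t) r = θt (-t) r * b := hcent_equiv _ _ hr_cent
      have hθtp_cent : ∀ b, b * θt t p = θt t p * b := hcent_equiv _ _ hcp
      have hg_cent : ∀ b, b * g = g * b := by
        intro b
        calc b * g = (b * θt t p) * r := by rw [hgdef, mul_assoc]
          _ = (θt t p * b) * r := by rw [hθtp_cent b]
          _ = θt t p * (b * r) := mul_assoc _ _ _
          _ = θt t p * (r * b) := by rw [hr_cent b]
          _ = (θt t p * r) * b := (mul_assoc _ _ _).symm
          _ = g * b := by rw [← hgdef]
      have he_ne : e ≠ 0 := fun h0 => hgne (by rw [← hθte, h0, map_zero])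
      have hstar_θr : star (θt (-t) r) = θt (-t) r := by rw [← map_star, hr_sa]
      have he_sa : star e = e := by
        rw [hedef, star_mul, hstar_θr, hp_sa]
        exact (hcθr p).symm
      have he_idem : e * e = e := by
        calc e * e = p * (θt (-t) r * p) * θt (-t) r := by rw [hedef]; simp only [mul_assoc]
          _ = p * (p * θt (-t) r) * θt (-t) r := by rw [← hcθr p]
          _ = (p * p) * (θt (-t) r * θt (-t) r) := by simp only [mul_assoc]
          _ = p * θt (-t) r := by rw [hp_idem, ← map_mul, hr_idem]
          _ = e := hedef.symm
      have he_cent : ∀ b, b * e = e * b := by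
        intro b
        rw [hedef]
        calc b * (p * θt (-t) r) = (b * p) * θt (-t) r := (mul_assoc b p _).symm
          _ = (p * b) * θt (-t) r := by rw [hcp b]
          _ = p * (b * θt (-t) r) := mul_assoc p b _
          _ = p * (θt (-t) r * b) := by rw [hcθr b]
          _ = (p * θt (-t) r) * b := (mul_assoc p _ b).symm
      have he_p : e * p = e := by
        calc e * p = p * (θt (-t) r * p) := by rw [hedef]; simp only [mul_assoc]
          _ = p * (p * θt (-t) r) := by rw [← hcθr p]
          _ = (p * p) * θt (-t) r := (mul_assoc _ _ _).symm
          _ = p * θt (-t) r := by rw [hp_idem]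
          _ = e := hedef.symm
      have hge : ∀ x, x ∈ s → g * θt x.1 x.2 = 0 := by
        intro x hx
        have h1 : r * ΘA ⟨x, hx⟩ = 0 := hzΘ ⟨x, hx⟩
        have h1' : r * θt x.1 x.2 = 0 := h1
        calc g * θt x.1 x.2 = θt t p * (r * θt x.1 x.2) := by rw [hgdef, mul_assoc]
          _ = θt t p * 0 := by rw [h1']
          _ = 0 := mul_zero _
      have hnotmem : (t, e) ∉ s := by
        intro hmem
        have h1 : zA * ΘA ⟨(t, e), hmem⟩ = ΘA ⟨(t, e), hmem⟩ := hzfix _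
        have h1' : zA * g = g := by
          have h1'' : zA * θt t e = θt t e := h1
          rwa [hθte] at h1''
        have h2 : r * g = 0 := by rw [hrdef, sub_mul, one_mul, h1', sub_self]
        have h3 : g * r = g := by
          calc g * r = θt t p * (r * r) := by rw [hgdef, mul_assoc]
            _ = θt t p * r := by rw [hr_idem]
            _ = g := hgdef.symm
        refine hgne ?_
        rw [← h3, hr_cent g]
        exact h2
      have hs' : insert (t, e) s ∈ S := by
        constructor
        · intro x hx
          rcases Set.mem_insert_iff.mp hx with hxe | hxs
          · subst hxe
            exact ⟨⟨he_sa, he_idem, he_cent⟩, he_p, he_ne⟩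
          · exact hsS.1 x hxs
        · intro x hx y hy hxy
          rcases Set.mem_insert_iff.mp hx with hxe | hxs <;>
            rcases Set.mem_insert_iff.mp hy with hye | hys
          · exact absurd (hxe.trans hye.symm) hxy
          · subst hxe
            show θt t e * θt y.1 y.2 = 0
            rw [hθte]
            exact hge y hys
          · subst hye
            show θt x.1 x.2 * θt t e = 0
            rw [hθte]
            rw [hg_cent (θt x.1 x.2)]
            exact hge x hxs
          · exact hsS.2 x hxs y hys hxy
      have hsub := hsmax.2 hs' (Set.subset_insert _ _)
      exact hnotmem (hsub (Set.mem_insert _ _))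
  -- ## Part 5 : resolutions of the identity
  have hfix1 : ∀ ξ : H, Stmt7Aux.supProj Pop ξ = ξ := by
    intro ξ
    exact congrArg (fun a : B.toStarSubalgebra => (a : H →L[ℂ] H) ξ) hzA1
  have hKfull : ∀ ξ : H, ξ ∈ Stmt7Aux.supK Pop := by
    intro ξ
    rw [← hfix1 ξ]
    exact Stmt7Aux.supProj_apply_mem Pop ξ
  have hPsum : ∀ ξ : H, HasSum (fun i : ↥s => Pop i ξ) ξ := fun ξ =>
    Stmt7Aux.hasSum_of_mem_supK Pop hPsa hPidem hPorth (hKfull ξ)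
  -- the image family θ (ΘA i)
  set Q' : ↥s → (H →L[ℂ] H) := fun i => ((θ (ΘA i) : B.toStarSubalgebra) : H →L[ℂ] H)
    with hQ'def
  have hΘQsa : ∀ i, star (θ (ΘA i)) = θ (ΘA i) := by
    intro i; rw [← map_star, hΘsa i]
  have hΘQidem : ∀ i, θ (ΘA i) * θ (ΘA i) = θ (ΘA i) := by
    intro i; rw [← map_mul, hΘidem i]
  have hΘQorth : ∀ i j : ↥s, i ≠ j → θ (ΘA i) * θ (ΘA j) = 0 := by
    intro i j hij; rw [← map_mul, hΘorth i j hij, map_zero]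
  have hQ'sa : ∀ i, IsSelfAdjoint (Q' i) := by
    intro i
    show star ((θ (ΘA i) : B.toStarSubalgebra) : H →L[ℂ] H) = _
    rw [show star ((θ (ΘA i) : B.toStarSubalgebra) : H →L[ℂ] H)
        = ((star (θ (ΘA i)) : B.toStarSubalgebra) : H →L[ℂ] H) from rfl, hΘQsa i]
  have hQ'idem : ∀ i, Q' i * Q' i = Q' i := by
    intro i
    rw [show Q' i * Q' i
        = ((θ (ΘA i) * θ (ΘA i) : B.toStarSubalgebra) : H →L[ℂ] H) from rfl, hΘQidem i]
  have hQ'orth : ∀ i j, i ≠ j → Q' i * Q' j = 0 := by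
    intro i j hij
    rw [show Q' i * Q' j
        = ((θ (ΘA i) * θ (ΘA j) : B.toStarSubalgebra) : H →L[ℂ] H) from rfl, hΘQorth i j hij]
    rfl
  have hz2mem : Stmt7Aux.supProj Q' ∈ B :=
    Stmt7Aux.supProj_mem_vNA B Q' (fun i => (θ (ΘA i)).2)
  set z2A : B.toStarSubalgebra := ⟨Stmt7Aux.supProj Q', hz2mem⟩ with hz2Adef
  have hz2fix : ∀ i, z2A * θ (ΘA i) = θ (ΘA i) := by
    intro i
    apply Subtype.ext
    apply ContinuousLinearMap.ext
    intro ξ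
    exact Stmt7Aux.supProj_fix Q' i ξ
  have he'Θ : ∀ i : ↥s, θ.symm (1 - z2A) * ΘA i = 0 := by
    intro i
    have h : (1 - z2A) * θ (ΘA i) = 0 := by
      rw [sub_mul, one_mul, hz2fix i, sub_self]
    have h2 := congrArg θ.symm h
    rw [map_mul, map_zero, StarAlgEquiv.symm_apply_apply] at h2
    exact h2
  have hz2one : z2A = 1 := by
    have he'0 : θ.symm (1 - z2A) = 0 := by
      apply Subtype.ext
      apply ContinuousLinearMap.ext
      intro ξ
      have h := Stmt7Aux.comp_supProj_zero Pop
        ((θ.symm (1 - z2A) : B.toStarSubalgebra) : H →L[ℂ] H)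
        (fun i η => congrArg (fun a : B.toStarSubalgebra => (a : H →L[ℂ] H) η) (he'Θ i)) ξ
      rw [hfix1 ξ] at h
      exact h
    have h3 := congrArg θ he'0
    rw [StarAlgEquiv.apply_symm_apply, map_zero] at h3
    have h4 : (1 : B.toStarSubalgebra) = z2A := by
      have := sub_eq_zero.mp h3
      exact this
    exact h4.symm
  have hfix2 : ∀ η : H, Stmt7Aux.supProj Q' η = η := by
    intro η
    exact congrArg (fun a : B.toStarSubalgebra => (a : H →L[ℂ] H) η) hz2one
  have hQ'sum : ∀ η : H, HasSum (fun i : ↥s => Q' i η) η := by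
    intro η
    refine Stmt7Aux.hasSum_of_mem_supK Q' hQ'sa hQ'idem hQ'orth ?_
    rw [← hfix2 η]
    exact Stmt7Aux.supProj_apply_mem Q' η
  -- ## Part 6 : the family of partial isometries
  set uA : ↥s → B.toStarSubalgebra :=
    fun i => θt (i : ℝ × B.toStarSubalgebra).1 (w * (i : ℝ × B.toStarSubalgebra).2) with huAdef
  have hu_id : ∀ i, uA i = θ (ΘA i) * θt (i : ℝ × B.toStarSubalgebra).1 w := by
    intro i
    show θt (i : ℝ × B.toStarSubalgebra).1 (w * (i : ℝ × B.toStarSubalgebra).2)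
      = θ (θt (i : ℝ × B.toStarSubalgebra).1 (i : ℝ × B.toStarSubalgebra).2)
        * θt (i : ℝ × B.toStarSubalgebra).1 w
    rw [← hcomm, ← map_mul]
    exact congrArg (θt (i : ℝ × B.toStarSubalgebra).1) (hint (i : ℝ × B.toStarSubalgebra).2).symm
  have hu_b : ∀ i, star (uA i) * uA i = ΘA i := by
    intro i
    have hstar : star (uA i)
        = θt (i : ℝ × B.toStarSubalgebra).1 ((i : ℝ × B.toStarSubalgebra).2 * star w) := by
      show star (θt (i : ℝ × B.toStarSubalgebra).1 (w * (i : ℝ × B.toStarSubalgebra).2)) = _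
      rw [← map_star, star_mul, (hmemfact i).1.1]
    rw [hstar]
    show θt _ _ * θt _ (w * _) = _
    rw [← map_mul]
    have key : ((i : ℝ × B.toStarSubalgebra).2 * star w) * (w * (i : ℝ × B.toStarSubalgebra).2)
        = (i : ℝ × B.toStarSubalgebra).2 := by
      calc ((i : ℝ × B.toStarSubalgebra).2 * star w) * (w * (i : ℝ × B.toStarSubalgebra).2)
          = (i : ℝ × B.toStarSubalgebra).2 * (star w * w) * (i : ℝ × B.toStarSubalgebra).2 := by
            simp only [mul_assoc]
        _ = (i : ℝ × B.toStarSubalgebra).2 * p * (i : ℝ × B.toStarSubalgebra).2 := by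
            rw [← hpdef]
        _ = (i : ℝ × B.toStarSubalgebra).2 * (p * (i : ℝ × B.toStarSubalgebra).2) :=
            mul_assoc _ _ _
        _ = (i : ℝ × B.toStarSubalgebra).2 * ((i : ℝ × B.toStarSubalgebra).2 * p) := by
            rw [← hcp (i : ℝ × B.toStarSubalgebra).2]
        _ = ((i : ℝ × B.toStarSubalgebra).2 * (i : ℝ × B.toStarSubalgebra).2) * p :=
            (mul_assoc _ _ _).symm
        _ = (i : ℝ × B.toStarSubalgebra).2 * p := by rw [(hmemfact i).1.2.1]
        _ = (i : ℝ × B.toStarSubalgebra).2 := (hmemfact i).2.1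
    rw [key]
  have hu_d : ∀ i, uA i * star (uA i) = θ (ΘA i) := by
    intro i
    have hstar : star (uA i)
        = θt (i : ℝ × B.toStarSubalgebra).1 ((i : ℝ × B.toStarSubalgebra).2 * star w) := by
      show star (θt (i : ℝ × B.toStarSubalgebra).1 (w * (i : ℝ × B.toStarSubalgebra).2)) = _
      rw [← map_star, star_mul, (hmemfact i).1.1]
    rw [hstar]
    show θt _ (w * _) * θt _ _ = _
    rw [← map_mul]
    have key : (w * (i : ℝ × B.toStarSubalgebra).2) * ((i : ℝ × B.toStarSubalgebra).2 * star w)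
        = θ ((i : ℝ × B.toStarSubalgebra).2) := by
      calc (w * (i : ℝ × B.toStarSubalgebra).2) * ((i : ℝ × B.toStarSubalgebra).2 * star w)
          = w * ((i : ℝ × B.toStarSubalgebra).2 * (i : ℝ × B.toStarSubalgebra).2) * star w := by
            simp only [mul_assoc]
        _ = w * (i : ℝ × B.toStarSubalgebra).2 * star w := by rw [(hmemfact i).1.2.1]
        _ = (θ (i : ℝ × B.toStarSubalgebra).2 * w) * star w := by
            rw [hint (i : ℝ × B.toStarSubalgebra).2]
        _ = θ (i : ℝ × B.toStarSubalgebra).2 * (w * star w) := mul_assoc _ _ _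
        _ = θ (i : ℝ × B.toStarSubalgebra).2 * q := by rw [← hqdef]
        _ = θ (i : ℝ × B.toStarSubalgebra).2 * θ p := by rw [hθp_q]
        _ = θ ((i : ℝ × B.toStarSubalgebra).2 * p) := by rw [← map_mul]
        _ = θ (i : ℝ × B.toStarSubalgebra).2 := by rw [(hmemfact i).2.1]
    rw [key, hcomm]
  have hu_P : ∀ i, uA i * ΘA i = uA i := by
    intro i
    show θt _ (w * _) * θt _ _ = θt _ (w * _)
    rw [← map_mul]
    congr 1
    rw [mul_assoc, (hmemfact i).1.2.1]
  have hu_a : ∀ i j, i ≠ j → star (uA i) * uA j = 0 := by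
    intro i j hij
    have h1 : star (uA i) = star (θt (i : ℝ × B.toStarSubalgebra).1 w) * θ (ΘA i) := by
      rw [hu_id i, star_mul]
      congr 1
      rw [← map_star, hΘsa i]
    calc star (uA i) * uA j
        = star (θt (i : ℝ × B.toStarSubalgebra).1 w) * θ (ΘA i)
          * (θ (ΘA j) * θt (j : ℝ × B.toStarSubalgebra).1 w) := by rw [h1, hu_id j]
      _ = star (θt (i : ℝ × B.toStarSubalgebra).1 w)
          * ((θ (ΘA i) * θ (ΘA j)) * θt (j : ℝ × B.toStarSubalgebra).1 w) := by
          simp only [mul_assoc]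
      _ = 0 := by rw [hΘQorth i j hij, zero_mul, mul_zero]
  have hu_c : ∀ i j, i ≠ j → uA i * star (uA j) = 0 := by
    intro i j hij
    have h2 : ΘA j * star (uA j) = star (uA j) := by
      have h := congrArg star (hu_P j)
      rwa [star_mul, hΘsa j] at h
    calc uA i * star (uA j) = (uA i * ΘA i) * (ΘA j * star (uA j)) := by rw [hu_P i, h2]
      _ = uA i * ((ΘA i * ΘA j) * star (uA j)) := by simp only [mul_assoc]
      _ = 0 := by rw [hΘorth i j hij, zero_mul, mul_zero]
  have hu_e : ∀ (b : B.toStarSubalgebra) (i : ↥s), θ b * uA i = uA i * b := by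
    intro b i
    have h1 : θ b = θt (i : ℝ × B.toStarSubalgebra).1
        (θ (θt (-(i : ℝ × B.toStarSubalgebra).1) b)) := by
      rw [hcomm, hflow]
    have key : θ (θt (-(i : ℝ × B.toStarSubalgebra).1) b) * (w * (i : ℝ × B.toStarSubalgebra).2)
        = (w * (i : ℝ × B.toStarSubalgebra).2) * θt (-(i : ℝ × B.toStarSubalgebra).1) b := by
      calc θ (θt (-(i : ℝ × B.toStarSubalgebra).1) b) * (w * (i : ℝ × B.toStarSubalgebra).2)
          = (θ (θt (-(i : ℝ × B.toStarSubalgebra).1) b) * w) * (i : ℝ × B.toStarSubalgebra).2 :=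
            (mul_assoc _ _ _).symm
        _ = (w * θt (-(i : ℝ × B.toStarSubalgebra).1) b) * (i : ℝ × B.toStarSubalgebra).2 := by
            rw [hint]
        _ = w * (θt (-(i : ℝ × B.toStarSubalgebra).1) b * (i : ℝ × B.toStarSubalgebra).2) :=
            mul_assoc _ _ _
        _ = w * ((i : ℝ × B.toStarSubalgebra).2 * θt (-(i : ℝ × B.toStarSubalgebra).1) b) := by
            rw [(hmemfact i).1.2.2]
        _ = (w * (i : ℝ × B.toStarSubalgebra).2) * θt (-(i : ℝ × B.toStarSubalgebra).1) b :=
            (mul_assoc _ _ _).symm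
    calc θ b * uA i
        = θt (i : ℝ × B.toStarSubalgebra).1 (θ (θt (-(i : ℝ × B.toStarSubalgebra).1) b))
          * θt (i : ℝ × B.toStarSubalgebra).1 (w * (i : ℝ × B.toStarSubalgebra).2) := by
          rw [← h1]
      _ = θt (i : ℝ × B.toStarSubalgebra).1
          (θ (θt (-(i : ℝ × B.toStarSubalgebra).1) b) * (w * (i : ℝ × B.toStarSubalgebra).2)) :=
          (map_mul _ _ _).symm
      _ = θt (i : ℝ × B.toStarSubalgebra).1
          ((w * (i : ℝ × B.toStarSubalgebra).2) * θt (-(i : ℝ × B.toStarSubalgebra).1) b) := by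
          rw [key]
      _ = uA i * θt (i : ℝ × B.toStarSubalgebra).1 (θt (-(i : ℝ × B.toStarSubalgebra).1) b) :=
          map_mul _ _ _
      _ = uA i * b := by rw [hflow]
  -- ## Part 7 : the unitary W as a strongly convergent sum
  have hinner_pair : ∀ (a b : B.toStarSubalgebra) (x y : H),
      ⟪(a : H →L[ℂ] H) x, (b : H →L[ℂ] H) y⟫_ℂ
        = ⟪x, ((star a * b : B.toStarSubalgebra) : H →L[ℂ] H) y⟫_ℂ := by
    intro a b x y
    have h := ContinuousLinearMap.adjoint_inner_right ((a : B.toStarSubalgebra) : H →L[ℂ] H)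
      x (((b : B.toStarSubalgebra) : H →L[ℂ] H) y)
    rw [← ContinuousLinearMap.star_eq_adjoint] at h
    exact h.symm
  have hnormPu : ∀ (i : ↥s) (ξ : H),
      ‖((uA i : B.toStarSubalgebra) : H →L[ℂ] H) ξ‖ ^ 2 = ‖Pop i ξ‖ ^ 2 := by
    intro i ξ
    have h1 : ⟪((uA i : B.toStarSubalgebra) : H →L[ℂ] H) ξ,
        ((uA i : B.toStarSubalgebra) : H →L[ℂ] H) ξ⟫_ℂ
        = ⟪ξ, ((ΘA i : B.toStarSubalgebra) : H →L[ℂ] H) ξ⟫_ℂ := by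
      rw [hinner_pair, hu_b i]
    have h2 : ⟪Pop i ξ, Pop i ξ⟫_ℂ = ⟪ξ, ((ΘA i : B.toStarSubalgebra) : H →L[ℂ] H) ξ⟫_ℂ := by
      have h3 := hinner_pair (ΘA i) (ΘA i) ξ ξ
      rw [hΘsa i, hΘidem i] at h3
      exact h3
    have h3 : ⟪((uA i : B.toStarSubalgebra) : H →L[ℂ] H) ξ,
        ((uA i : B.toStarSubalgebra) : H →L[ℂ] H) ξ⟫_ℂ = ⟪Pop i ξ, Pop i ξ⟫_ℂ :=
      h1.trans h2.symm
    rw [inner_self_eq_norm_sq_to_K, inner_self_eq_norm_sq_to_K] at h3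
    exact_mod_cast h3
  have huorth : ∀ (ξ η : H) (i j : ↥s), i ≠ j →
      ⟪((uA i : B.toStarSubalgebra) : H →L[ℂ] H) ξ,
        ((uA j : B.toStarSubalgebra) : H →L[ℂ] H) η⟫_ℂ = 0 := by
    intro ξ η i j hij
    rw [hinner_pair, hu_a i j hij]
    show ⟪ξ, ((0 : B.toStarSubalgebra) : H →L[ℂ] H) η⟫_ℂ = 0
    simp
  have hsummP : ∀ ξ : H, Summable (fun i : ↥s => ‖Pop i ξ‖ ^ 2) := fun ξ =>
    summable_of_sum_le (fun i => sq_nonneg _)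
      (fun F => Stmt7Aux.sum_proj_norm_sq_le Pop hPsa hPidem hPorth F ξ)
  have hsummU : ∀ ξ : H, Summable (fun i : ↥s => ((uA i : B.toStarSubalgebra) : H →L[ℂ] H) ξ) := by
    intro ξ
    apply Stmt7Aux.ortho_summable _ (fun i j hij => huorth ξ ξ i j hij)
    have h := hsummP ξ
    have heq : (fun i : ↥s => ‖Pop i ξ‖ ^ 2)
        = fun i : ↥s => ‖((uA i : B.toStarSubalgebra) : H →L[ℂ] H) ξ‖ ^ 2 :=
      funext fun i => (hnormPu i ξ).symm
    rwa [heq] at h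
  set Wfun : H → H := fun ξ => ∑' i : ↥s, ((uA i : B.toStarSubalgebra) : H →L[ℂ] H) ξ
    with hWfundef
  have hWS : ∀ ξ : H, HasSum (fun i : ↥s => ((uA i : B.toStarSubalgebra) : H →L[ℂ] H) ξ)
      (Wfun ξ) := fun ξ => (hsummU ξ).hasSum
  have hWbound : ∀ ξ : H, ‖Wfun ξ‖ ≤ ‖ξ‖ := by
    intro ξ
    refine le_of_tendsto (Filter.Tendsto.norm (hWS ξ)) (Filter.Eventually.of_forall fun F => ?_)
    have h1 : ‖∑ i ∈ F, ((uA i : B.toStarSubalgebra) : H →L[ℂ] H) ξ‖ ^ 2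
        = ∑ i ∈ F, ‖((uA i : B.toStarSubalgebra) : H →L[ℂ] H) ξ‖ ^ 2 :=
      Stmt7Aux.norm_sum_sq _ F (fun i _ j _ hij => huorth ξ ξ i j hij)
    have h2 : ∑ i ∈ F, ‖((uA i : B.toStarSubalgebra) : H →L[ℂ] H) ξ‖ ^ 2
        = ∑ i ∈ F, ‖Pop i ξ‖ ^ 2 := Finset.sum_congr rfl fun i _ => hnormPu i ξ
    have h3 := Stmt7Aux.sum_proj_norm_sq_le Pop hPsa hPidem hPorth F ξ
    nlinarith [norm_nonneg (∑ i ∈ F, ((uA i : B.toStarSubalgebra) : H →L[ℂ] H) ξ),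
      norm_nonneg ξ]
  set Wlin : H →ₗ[ℂ] H :=
    { toFun := Wfun
      map_add' := by
        intro ξ η
        have h1 : HasSum (fun i : ↥s => ((uA i : B.toStarSubalgebra) : H →L[ℂ] H) (ξ + η))
            (Wfun ξ + Wfun η) := by
          have h := (hWS ξ).add (hWS η)
          have heq : (fun i : ↥s => ((uA i : B.toStarSubalgebra) : H →L[ℂ] H) (ξ + η))
              = fun i : ↥s => ((uA i : B.toStarSubalgebra) : H →L[ℂ] H) ξ
                + ((uA i : B.toStarSubalgebra) : H →L[ℂ] H) η :=
            funext fun i => map_add _ _ _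
          rw [heq]
          exact h
        exact (hWS (ξ + η)).unique h1
      map_smul' := by
        intro c ξ
        have h1 : HasSum (fun i : ↥s => ((uA i : B.toStarSubalgebra) : H →L[ℂ] H) (c • ξ))
            (c • Wfun ξ) := by
          have h := (hWS ξ).const_smul c
          have heq : (fun i : ↥s => ((uA i : B.toStarSubalgebra) : H →L[ℂ] H) (c • ξ))
              = fun i : ↥s => c • ((uA i : B.toStarSubalgebra) : H →L[ℂ] H) ξ :=
            funext fun i => map_smul _ c _
          rw [heq]
          exact h
        exact (hWS (c • ξ)).unique h1 } with hWlindef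
  set Wop : H →L[ℂ] H := Wlin.mkContinuous 1 (fun ξ => by rw [one_mul]; exact hWbound ξ)
    with hWopdef
  have hWS2 : ∀ ξ : H, HasSum (fun i : ↥s => ((uA i : B.toStarSubalgebra) : H →L[ℂ] H) ξ)
      (Wop ξ) := fun ξ => hWS ξ
  have hWmem : Wop ∈ B := by
    have hgoal : Wop ∈ Set.centralizer (Set.centralizer (B : Set (H →L[ℂ] H))) := by
      apply Set.mem_centralizer_iff.mpr
      intro T hT
      apply ContinuousLinearMap.ext
      intro ξ
      show T (Wop ξ) = Wop (T ξ)
      have h1 : HasSum (fun i : ↥s => T (((uA i : B.toStarSubalgebra) : H →L[ℂ] H) ξ))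
          (T (Wop ξ)) := ContinuousLinearMap.hasSum T (hWS2 ξ)
      have h2 : (fun i : ↥s => T (((uA i : B.toStarSubalgebra) : H →L[ℂ] H) ξ))
          = fun i : ↥s => ((uA i : B.toStarSubalgebra) : H →L[ℂ] H) (T ξ) := by
        funext i
        have h3 := Set.mem_centralizer_iff.mp hT _ (uA i).2
        calc T (((uA i : B.toStarSubalgebra) : H →L[ℂ] H) ξ)
            = (T * ((uA i : B.toStarSubalgebra) : H →L[ℂ] H)) ξ := rfl
          _ = (((uA i : B.toStarSubalgebra) : H →L[ℂ] H) * T) ξ := by rw [← h3]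
          _ = ((uA i : B.toStarSubalgebra) : H →L[ℂ] H) (T ξ) := rfl
      rw [h2] at h1
      exact h1.unique (hWS2 (T ξ))
    rw [B.centralizer_centralizer] at hgoal
    exact hgoal
  set WA : B.toStarSubalgebra := ⟨Wop, hWmem⟩ with hWAdef
  -- W is an isometry
  have hst1 : ∀ ξ η : H, ⟪Wop η, Wop ξ⟫_ℂ = ⟪η, ξ⟫_ℂ := by
    intro ξ η
    have hA : HasSum (fun j : ↥s => ⟪Wop η, ((uA j : B.toStarSubalgebra) : H →L[ℂ] H) ξ⟫_ℂ)
        ⟪Wop η, Wop ξ⟫_ℂ := Stmt7Aux.hasSum_inner_right _ (hWS2 ξ)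
    have hB : ∀ j : ↥s, ⟪Wop η, ((uA j : B.toStarSubalgebra) : H →L[ℂ] H) ξ⟫_ℂ
        = ⟪η, Pop j ξ⟫_ℂ := by
      intro j
      have h1 : HasSum (fun i : ↥s => ⟪((uA i : B.toStarSubalgebra) : H →L[ℂ] H) η,
          ((uA j : B.toStarSubalgebra) : H →L[ℂ] H) ξ⟫_ℂ)
          ⟪Wop η, ((uA j : B.toStarSubalgebra) : H →L[ℂ] H) ξ⟫_ℂ :=
        Stmt7Aux.hasSum_inner_left _ (hWS2 η)
      have h3 := hasSum_single (f := fun i : ↥s => ⟪((uA i : B.toStarSubalgebra) : H →L[ℂ] H) η,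
          ((uA j : B.toStarSubalgebra) : H →L[ℂ] H) ξ⟫_ℂ) j (fun i hij => huorth η ξ i j hij)
      have h4 := h1.unique h3
      rw [h4]
      show ⟪((uA j : B.toStarSubalgebra) : H →L[ℂ] H) η,
          ((uA j : B.toStarSubalgebra) : H →L[ℂ] H) ξ⟫_ℂ = ⟪η, Pop j ξ⟫_ℂ
      rw [hinner_pair, hu_b j]
    have hA' : HasSum (fun j : ↥s => ⟪η, Pop j ξ⟫_ℂ) ⟪Wop η, Wop ξ⟫_ℂ := by
      rw [← funext hB]
      exact hA
    exact hA'.unique (Stmt7Aux.hasSum_inner_right η (hPsum ξ))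
  have hWisom : star WA * WA = 1 := by
    apply Subtype.ext
    apply ContinuousLinearMap.ext
    intro ξ
    show (star Wop) (Wop ξ) = ξ
    apply ext_inner_left ℂ
    intro η
    have h1 : ⟪η, (star Wop) (Wop ξ)⟫_ℂ = ⟪Wop η, Wop ξ⟫_ℂ := by
      rw [ContinuousLinearMap.star_eq_adjoint]
      exact ContinuousLinearMap.adjoint_inner_right Wop η (Wop ξ)
    rw [h1, hst1 ξ η]
  -- the adjoint of W as a sum
  have hsummU' : ∀ η : H,
      Summable (fun j : ↥s => ((star (uA j) : B.toStarSubalgebra) : H →L[ℂ] H) η) := by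
    intro η
    apply Stmt7Aux.ortho_summable
    · intro i j hij
      have h := hinner_pair (star (uA i)) (star (uA j)) η η
      rw [star_star, hu_c i j hij] at h
      rw [h]
      show ⟪η, ((0 : B.toStarSubalgebra) : H →L[ℂ] H) η⟫_ℂ = 0
      simp
    · have hnorm' : ∀ j : ↥s, ‖((star (uA j) : B.toStarSubalgebra) : H →L[ℂ] H) η‖ ^ 2
          = ‖Q' j η‖ ^ 2 := by
        intro j
        have h1 := hinner_pair (star (uA j)) (star (uA j)) η η
        rw [star_star, hu_d j] at h1
        have h2 := hinner_pair (θ (ΘA j)) (θ (ΘA j)) η η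
        rw [hΘQsa j, hΘQidem j] at h2
        have h3 : ⟪((star (uA j) : B.toStarSubalgebra) : H →L[ℂ] H) η,
            ((star (uA j) : B.toStarSubalgebra) : H →L[ℂ] H) η⟫_ℂ = ⟪Q' j η, Q' j η⟫_ℂ := by
          rw [h1, h2]
        rw [inner_self_eq_norm_sq_to_K, inner_self_eq_norm_sq_to_K] at h3
        exact_mod_cast h3
      have h := summable_of_sum_le (c := ‖η‖ ^ 2) (fun j : ↥s => sq_nonneg _)
        (fun F => Stmt7Aux.sum_proj_norm_sq_le Q' hQ'sa hQ'idem hQ'orth F η)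
      have heq : (fun j : ↥s => ‖Q' j η‖ ^ 2)
          = fun j : ↥s => ‖((star (uA j) : B.toStarSubalgebra) : H →L[ℂ] H) η‖ ^ 2 :=
        funext fun j => (hnorm' j).symm
      rwa [heq] at h
  have hW'S : ∀ η : H, HasSum (fun j : ↥s => ((star (uA j) : B.toStarSubalgebra) : H →L[ℂ] H) η)
      (∑' j : ↥s, ((star (uA j) : B.toStarSubalgebra) : H →L[ℂ] H) η) :=
    fun η => (hsummU' η).hasSum
  have hstarW : ∀ η : H, (star Wop) η
      = ∑' j : ↥s, ((star (uA j) : B.toStarSubalgebra) : H →L[ℂ] H) η := by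
    intro η
    apply ext_inner_right ℂ
    intro ζ
    have h1 : ⟪(star Wop) η, ζ⟫_ℂ = ⟪η, Wop ζ⟫_ℂ := by
      rw [ContinuousLinearMap.star_eq_adjoint]
      exact ContinuousLinearMap.adjoint_inner_left Wop ζ η
    have h2 : HasSum (fun j : ↥s => ⟪η, ((uA j : B.toStarSubalgebra) : H →L[ℂ] H) ζ⟫_ℂ)
        ⟪η, Wop ζ⟫_ℂ := Stmt7Aux.hasSum_inner_right η (hWS2 ζ)
    have h3 : HasSum (fun j : ↥s =>
        ⟪((star (uA j) : B.toStarSubalgebra) : H →L[ℂ] H) η, ζ⟫_ℂ)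
        ⟪∑' j : ↥s, ((star (uA j) : B.toStarSubalgebra) : H →L[ℂ] H) η, ζ⟫_ℂ :=
      Stmt7Aux.hasSum_inner_left ζ (hW'S η)
    have h4 : (fun j : ↥s => ⟪((star (uA j) : B.toStarSubalgebra) : H →L[ℂ] H) η, ζ⟫_ℂ)
        = fun j : ↥s => ⟪η, ((uA j : B.toStarSubalgebra) : H →L[ℂ] H) ζ⟫_ℂ := by
      funext j
      have h5 := ContinuousLinearMap.adjoint_inner_left
        ((uA j : B.toStarSubalgebra) : H →L[ℂ] H) ζ η
      rw [← ContinuousLinearMap.star_eq_adjoint] at h5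
      exact h5
    rw [h4] at h3
    rw [h1]
    exact h2.unique h3
  have hWcoisom : WA * star WA = 1 := by
    apply Subtype.ext
    apply ContinuousLinearMap.ext
    intro η
    show Wop ((star Wop) η) = η
    rw [hstarW η]
    have h1 : HasSum (fun j : ↥s => Wop (((star (uA j) : B.toStarSubalgebra) : H →L[ℂ] H) η))
        (Wop (∑' j : ↥s, ((star (uA j) : B.toStarSubalgebra) : H →L[ℂ] H) η)) :=
      ContinuousLinearMap.hasSum Wop (hW'S η)
    have h2 : (fun j : ↥s => Wop (((star (uA j) : B.toStarSubalgebra) : H →L[ℂ] H) η))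
        = fun j : ↥s => Q' j η := by
      funext j
      have h3 : HasSum (fun i : ↥s => ((uA i : B.toStarSubalgebra) : H →L[ℂ] H)
          (((star (uA j) : B.toStarSubalgebra) : H →L[ℂ] H) η))
          (Wop (((star (uA j) : B.toStarSubalgebra) : H →L[ℂ] H) η)) := hWS2 _
      have h4 : ∀ i : ↥s, i ≠ j → ((uA i : B.toStarSubalgebra) : H →L[ℂ] H)
          (((star (uA j) : B.toStarSubalgebra) : H →L[ℂ] H) η) = 0 := by
        intro i hij
        exact congrArg (fun a : B.toStarSubalgebra => (a : H →L[ℂ] H) η) (hu_c i j hij)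
      have h6 := hasSum_single (f := fun i : ↥s => ((uA i : B.toStarSubalgebra) : H →L[ℂ] H)
          (((star (uA j) : B.toStarSubalgebra) : H →L[ℂ] H) η)) j h4
      have h7 := h3.unique h6
      rw [h7]
      exact congrArg (fun a : B.toStarSubalgebra => (a : H →L[ℂ] H) η) (hu_d j)
    rw [h2] at h1
    exact h1.unique (hQ'sum η)
  -- W implements θ
  have hθW : ∀ b : B.toStarSubalgebra, θ b * WA = WA * b := by
    intro b
    apply Subtype.ext
    apply ContinuousLinearMap.ext
    intro ξ
    show ((θ b : B.toStarSubalgebra) : H →L[ℂ] H) (Wop ξ)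
      = Wop (((b : B.toStarSubalgebra) : H →L[ℂ] H) ξ)
    have h1 : HasSum (fun i : ↥s => ((θ b : B.toStarSubalgebra) : H →L[ℂ] H)
        (((uA i : B.toStarSubalgebra) : H →L[ℂ] H) ξ))
        (((θ b : B.toStarSubalgebra) : H →L[ℂ] H) (Wop ξ)) :=
      ContinuousLinearMap.hasSum _ (hWS2 ξ)
    have h2 : (fun i : ↥s => ((θ b : B.toStarSubalgebra) : H →L[ℂ] H)
        (((uA i : B.toStarSubalgebra) : H →L[ℂ] H) ξ))
        = fun i : ↥s => ((uA i : B.toStarSubalgebra) : H →L[ℂ] H)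
          (((b : B.toStarSubalgebra) : H →L[ℂ] H) ξ) := by
      funext i
      exact congrArg (fun a : B.toStarSubalgebra => (a : H →L[ℂ] H) ξ) (hu_e b i)
    rw [h2] at h1
    exact h1.unique (hWS2 _)
  refine ⟨WA, hWisom, hWcoisom, ?_⟩
  intro b
  calc θ b = θ b * 1 := (mul_one _).symm
    _ = θ b * (WA * star WA) := by rw [hWcoisom]
    _ = (θ b * WA) * star WA := (mul_assoc _ _ _).symm
    _ = (WA * b) * star WA := by rw [hθW b]
    _ = WA * b * star WA := rfl
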